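/- Let k >= 1 and let real numbers 0 <= d'_1 <= d'_2 <= ... <= d'_k, e > 0, B >= k be given. Let l be the index with d'_l = ... = d'_k, and let D'_{l-1} = d'_1 + ... + d'_{l-1}. Then F_l = (D'_{l-1} + (k-l-1) d'_l + e - e/B)/(D'_{l-1} + (k-l) d'_l + e) <= 1 - 1/B. -/

import Mathlib

open Finset in
/-- The chained estimate F_ℓ ≤ 1 - 1/B for the product-function Łojasiewicz bound. -/
theorem stmt_8 (k l : ℕ) (hk : 1 ≤ k) (hl1 : 1 ≤ l) (hlk : l ≤ k)
    (d' : ℕ → ℝ) (e B : ℝ)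
    (hd0 : ∀ i, 1 ≤ i → i ≤ k → 0 ≤ d' i)
    (hmono : ∀ i, 1 ≤ i → i < k → d' i ≤ d' (i + 1))
    (heq : ∀ i, l ≤ i → i ≤ k → d' i = d' l)
    (he : 0 < e) (hB : (k : ℝ) ≤ B) :
    ((∑ i ∈ Finset.Icc 1 (l - 1), d' i) + ((k : ℝ) - l - 1) * d' l + e - e / B) /
        ((∑ i ∈ Finset.Icc 1 (l - 1), d' i) + ((k : ℝ) - l) * d' l + e)
      ≤ 1 - 1 / B := by
  have hkB : (1 : ℝ) ≤ (k : ℝ) := by exact_mod_cast hk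
  have hB1 : (1 : ℝ) ≤ B := le_trans hkB hB
  have hB0 : (0 : ℝ) < B := lt_of_lt_of_le one_pos hB1
  have hdl : 0 ≤ d' l := hd0 l hl1 hlk
  -- monotonicity up to l
  have hmono' : ∀ j, j ≤ k → ∀ i, 1 ≤ i → i ≤ j → d' i ≤ d' j := by
    intro j
    induction j with
    | zero => omega
    | succ m ih =>
      intro hjk i hi hij
      rcases Nat.lt_or_ge i (m + 1) with h | h
      · have hm1 : 1 ≤ m := by omega
        exact le_trans (ih (by omega) i hi (by omega)) (hmono m hm1 (by omega))
      · have : i = m + 1 := by omega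
        simp [this]
  have hchain : ∀ i, 1 ≤ i → i ≤ l → d' i ≤ d' l := fun i hi hil => hmono' l hlk i hi hil
  have hS : (∑ i ∈ Finset.Icc 1 (l - 1), d' i) ≤ ((l : ℝ) - 1) * d' l := by
    calc (∑ i ∈ Finset.Icc 1 (l - 1), d' i) ≤ ∑ i ∈ Finset.Icc 1 (l - 1), d' l := by
          apply Finset.sum_le_sum
          intro i hi
          simp only [Finset.mem_Icc] at hi
          exact hchain i hi.1 (by omega)
      _ = ((l - 1 : ℕ) : ℝ) * d' l := by
          rw [Finset.sum_const, Nat.card_Icc]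
          simp [nsmul_eq_mul]
      _ = ((l : ℝ) - 1) * d' l := by
          congr 1
          have : (1:ℕ) ≤ l := hl1
          push_cast [Nat.cast_sub this]
          ring
  have hS0 : 0 ≤ (∑ i ∈ Finset.Icc 1 (l - 1), d' i) :=
    Finset.sum_nonneg (fun i hi => by
      simp only [Finset.mem_Icc] at hi; exact hd0 i hi.1 (by omega))
  have hkl : (0 : ℝ) ≤ (k : ℝ) - l := by
    have : (l : ℝ) ≤ k := by exact_mod_cast hlk
    linarith
  have hD : 0 < (∑ i ∈ Finset.Icc 1 (l - 1), d' i) + ((k : ℝ) - l) * d' l + e := by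
    nlinarith
  rw [div_le_iff₀ hD]
  have hlk' : (l : ℝ) ≤ k := by exact_mod_cast hlk
  have hkey : (∑ i ∈ Finset.Icc 1 (l - 1), d' i) + ((k : ℝ) - l) * d' l ≤ B * d' l := by
    nlinarith
  have heB : B ≠ 0 := hB0.ne'
  field_simp
  nlinarith [mul_le_mul_of_nonneg_left hkey hB0.le]
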